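/- arXiv:1904.10096 — 2 statements merged into one kernel-verified Lean document; each statement's English description precedes it below -/
import Mathlib

section
/- For the N×N input-queued switch, the cone K = {x ∈ ℝ^{N²}₊ : x = Σ_{ℓ=1}^{2N} ξ_ℓ c⁽ˡ⁾, ξ_ℓ ≥ 0}, generated by the 2N row-indicator and column-indicator vectors c⁽ˡ⁾, equals the set {x ∈ ℝ^{N²}₊ : x_{ij} = (1/N) Σ_{j'} x_{ij'} + (1/N) Σ_{i'} x_{i'j} − (1/N²) Σ_{i',j'} x_{i'j'} for all i, j ∈ [N]}, where entries are indexed by pairs (i,j). -/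
/-!
A conic combination of row and column indicators is the matrix `ξr i + ξc j`. Conversely, the
mean identity says exactly that `x` has this additive form, with the row means and the column
means minus the grand mean as coefficients. Such coefficients may be negative, but moving the
minimum of the row coefficients over to the column coefficients makes both families
nonnegative, because `x ≥ 0`.
-/

open Finset

section SeparableMatrix

variable {ι κ : Type*} [Fintype ι]

theorem sum_smul_indicators_apply [Fintype κ] [DecidableEq ι] [DecidableEq κ]
    {rowInd : ι → (ι × κ → ℝ)} {colInd : κ → (ι × κ → ℝ)}
    (hrow : ∀ l p, rowInd l p = if p.1 = l then 1 else 0)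
    (hcol : ∀ l p, colInd l p = if p.2 = l then 1 else 0)
    (a : ι → ℝ) (b : κ → ℝ) (p : ι × κ) :
    ((∑ l, a l • rowInd l) + ∑ l, b l • colInd l) p = a p.1 + b p.2 := by
  simp [hrow, hcol]

theorem exists_add_iff_eq_mean [Fintype κ] [Nonempty ι] [Nonempty κ] (x : ι × κ → ℝ) :
    (∃ (a : ι → ℝ) (b : κ → ℝ), ∀ i j, x (i, j) = a i + b j) ↔
      ∀ i j, x (i, j) =
        (1 / (Fintype.card κ : ℝ)) * ∑ j', x (i, j')
          + (1 / (Fintype.card ι : ℝ)) * ∑ i', x (i', j)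
          - (1 / ((Fintype.card ι : ℝ) * Fintype.card κ)) * ∑ i', ∑ j', x (i', j') := by
  have hι : (Fintype.card ι : ℝ) ≠ 0 := Nat.cast_ne_zero.2 Fintype.card_ne_zero
  have hκ : (Fintype.card κ : ℝ) ≠ 0 := Nat.cast_ne_zero.2 Fintype.card_ne_zero
  constructor
  · rintro ⟨a, b, hx⟩ i j
    simp only [hx, sum_add_distrib, sum_const, card_univ, nsmul_eq_mul, ← mul_sum]
    field_simp
    ring
  · intro hx
    exact ⟨fun i => (1 / (Fintype.card κ : ℝ)) * ∑ j', x (i, j'),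
      fun j => (1 / (Fintype.card ι : ℝ)) * ∑ i', x (i', j)
        - (1 / ((Fintype.card ι : ℝ) * Fintype.card κ)) * ∑ i', ∑ j', x (i', j'),
      fun i j => (hx i j).trans (add_sub_assoc _ _ _)⟩

theorem exists_nonneg_add_of_nonneg [Nonempty ι] {x : ι × κ → ℝ} (hx : ∀ p, 0 ≤ x p)
    {a : ι → ℝ} {b : κ → ℝ} (hab : ∀ i j, x (i, j) = a i + b j) :
    ∃ (a' : ι → ℝ) (b' : κ → ℝ), (∀ i, 0 ≤ a' i) ∧ (∀ j, 0 ≤ b' j) ∧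
      ∀ i j, x (i, j) = a' i + b' j := by
  obtain ⟨i₀, -, hi₀⟩ := exists_min_image univ a univ_nonempty
  refine ⟨fun i => a i - a i₀, fun j => b j + a i₀, fun i => ?_, fun j => ?_, fun i j => ?_⟩
  · linarith [hi₀ i (mem_univ i)]
  · linarith [hx (i₀, j), hab i₀ j]
  · linarith [hab i j]

end SeparableMatrix

/-- for the N×N input-queued switch, the cone generated by the row-indicator
and column-indicator vectors, intersected with the nonnegative orthant as conic
combinations, equals the set of nonnegative `x` satisfying
`x_{ij} = (1/N) Σ_{j'} x_{ij'} + (1/N) Σ_{i'} x_{i'j} − (1/N²) Σ_{i',j'} x_{i'j'}`. -/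
theorem stmt4 (N : ℕ) (hN : 0 < N)
    (rowInd : Fin N → (Fin N × Fin N → ℝ))
    (colInd : Fin N → (Fin N × Fin N → ℝ))
    (hrow : ∀ l p, rowInd l p = if p.1 = l then 1 else 0)
    (hcol : ∀ l p, colInd l p = if p.2 = l then 1 else 0) :
    {x : Fin N × Fin N → ℝ | (∀ p, 0 ≤ x p) ∧
        ∃ ξr ξc : Fin N → ℝ, (∀ l, 0 ≤ ξr l) ∧ (∀ l, 0 ≤ ξc l) ∧
          x = (∑ l, ξr l • rowInd l) + ∑ l, ξc l • colInd l} =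
    {x : Fin N × Fin N → ℝ | (∀ p, 0 ≤ x p) ∧
        ∀ i j : Fin N, x (i, j) =
          (1 / (N : ℝ)) * ∑ j', x (i, j') + (1 / (N : ℝ)) * ∑ i', x (i', j)
            - (1 / (N : ℝ) ^ 2) * ∑ i', ∑ j', x (i', j')} := by
  have : NeZero N := ⟨hN.ne'⟩
  have hmean := exists_add_iff_eq_mean (ι := Fin N) (κ := Fin N)
  simp only [Fintype.card_fin, ← sq] at hmean
  ext x
  refine ⟨fun ⟨hx, ξr, ξc, _, _, hξ⟩ => ⟨hx, (hmean x).1 ⟨ξr, ξc, fun i j => ?_⟩⟩,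
    fun ⟨hx, hxmean⟩ => ⟨hx, ?_⟩⟩
  · rw [hξ, sum_smul_indicators_apply hrow hcol]
  · obtain ⟨a, b, hab⟩ := (hmean x).2 hxmean
    obtain ⟨a', b', ha', hb', hab'⟩ := exists_nonneg_add_of_nonneg hx hab
    refine ⟨a', b', ha', hb', funext fun p => ?_⟩
    rw [sum_smul_indicators_apply hrow hcol, hab']
end

section
/- Let Φ be a nonnegative real random variable, and let α, β be nonnegative bounded random variables such that Φ, α, β are mutually independent, with E[α] = (1−ε)c and E[β] = c for some c > 0 and ε ∈ (0,1). Define χ = max(β − Φ − α, 0) (unused service) and Φ⁺ = Φ + α − β + χ, and suppose Φ⁺ has the same distribution as Φ (steady state) with E[Φ²] < ∞ and Φ⁺χ = 0 almost surely. Then E[Φ] ≥ (E[α²] + E[β²] − 2E[α]E[β] − E[χ²]) / (2εc), and E[χ] = εc. -/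
/-! Since `Φplus = Φ + α - β + χ` has the law of `Φ`, the drifts of `Φ` and `Φ²` vanish. The first
gives `E χ = E β - E α`. For the second, complementarity `Φplus χ = 0` turns `(Z + χ)²` into
`Z² - χ²` with `Z = Φ + α - β`, and independence expands `E Z²`; the terms `E Φ²` cancel, leaving
`2 (E β - E α) E Φ = E α² + E β² - 2 E α E β - E χ²`. -/

open MeasureTheory ProbabilityTheory

theorem add_sq_eq_sq_sub_sq_of_add_mul_eq_zero {R : Type*} [CommRing R] {z x : R} (h : (z + x) * x = 0) :
    (z + x) ^ 2 = z ^ 2 - x ^ 2 := by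
  linear_combination 2 * h

section

variable {Ω : Type*} [MeasurableSpace Ω] {μ : Measure Ω}

theorem memLp_of_nonneg_of_le [IsFiniteMeasure μ] {f : Ω → ℝ} {p : ENNReal} {B : ℝ}
    (hf : AEStronglyMeasurable f μ) (h0 : ∀ ω, 0 ≤ f ω) (hB : ∀ ω, f ω ≤ B) : MemLp f p μ :=
  MemLp.of_bound hf B <| ae_of_all _ fun ω => by
    rw [Real.norm_eq_abs, abs_of_nonneg (h0 ω)]; exact hB ω

theorem integral_add_sq_of_indepFun {X Y : Ω → ℝ} (hX : MemLp X 2 μ) (hY : MemLp Y 2 μ)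
    (hXY : IndepFun X Y μ) :
    ∫ ω, (X ω + Y ω) ^ 2 ∂μ
      = ∫ ω, X ω ^ 2 ∂μ + 2 * (∫ ω, X ω ∂μ) * (∫ ω, Y ω ∂μ) + ∫ ω, Y ω ^ 2 ∂μ := by
  have hXY2 : Integrable (fun ω => 2 * (X ω * Y ω)) μ := (hX.integrable_mul hY).const_mul 2
  have hX2XY : Integrable (fun ω => X ω ^ 2 + 2 * (X ω * Y ω)) μ := hX.integrable_sq.add hXY2
  simp_rw [add_sq, mul_assoc]
  rw [integral_add hX2XY hY.integrable_sq,
    integral_add hX.integrable_sq hXY2, integral_const_mul,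
    hXY.integral_fun_mul_eq_mul_integral hX.1 hY.1]

theorem integral_sub_sq_of_indepFun {X Y : Ω → ℝ} (hX : MemLp X 2 μ) (hY : MemLp Y 2 μ)
    (hXY : IndepFun X Y μ) :
    ∫ ω, (X ω - Y ω) ^ 2 ∂μ
      = ∫ ω, X ω ^ 2 ∂μ - 2 * (∫ ω, X ω ∂μ) * (∫ ω, Y ω ∂μ) + ∫ ω, Y ω ^ 2 ∂μ := by
  have h := integral_add_sq_of_indepFun hX hY.neg (hXY.comp measurable_id measurable_neg)
  simp only [Pi.neg_apply, ← sub_eq_add_neg, neg_sq, integral_neg] at h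
  rw [h]; ring

theorem integral_add_sq_of_add_mul_eq_zero {Z χ : Ω → ℝ} (hZ : MemLp Z 2 μ) (hχ : MemLp χ 2 μ)
    (h : ∀ᵐ ω ∂μ, (Z ω + χ ω) * χ ω = 0) :
    ∫ ω, (Z ω + χ ω) ^ 2 ∂μ = ∫ ω, Z ω ^ 2 ∂μ - ∫ ω, χ ω ^ 2 ∂μ := by
  rw [integral_congr_ae (h.mono fun ω => add_sq_eq_sq_sub_sq_of_add_mul_eq_zero),
    integral_sub hZ.integrable_sq hχ.integrable_sq]

theorem first_moment_drift_eq_of_identDistrib {X A S χ : Ω → ℝ} (hX : Integrable X μ)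
    (hA : Integrable A μ) (hS : Integrable S μ) (hχ : Integrable χ μ)
    (hstat : IdentDistrib (fun ω => X ω + A ω - S ω + χ ω) X μ μ) :
    ∫ ω, χ ω ∂μ = ∫ ω, S ω ∂μ - ∫ ω, A ω ∂μ := by
  have h := hstat.integral_eq
  rw [integral_add (f := fun ω => X ω + A ω - S ω) ((hX.add hA).sub hS) hχ,
    integral_sub (f := fun ω => X ω + A ω) (hX.add hA) hS, integral_add hX hA] at h
  linarith

theorem second_moment_drift_eq_of_identDistrib [IsFiniteMeasure μ] {X A S χ : Ω → ℝ}
    (hX : MemLp X 2 μ) (hA : MemLp A 2 μ) (hS : MemLp S 2 μ) (hχ : MemLp χ 2 μ)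
    (hXA : IndepFun X A μ) (hXAS : IndepFun (X + A) S μ)
    (hstat : IdentDistrib (fun ω => X ω + A ω - S ω + χ ω) X μ μ)
    (hcomp : ∀ᵐ ω ∂μ, (X ω + A ω - S ω + χ ω) * χ ω = 0) :
    2 * (∫ ω, S ω ∂μ - ∫ ω, A ω ∂μ) * ∫ ω, X ω ∂μ
      = ∫ ω, A ω ^ 2 ∂μ + ∫ ω, S ω ^ 2 ∂μ - 2 * (∫ ω, A ω ∂μ) * (∫ ω, S ω ∂μ)
        - ∫ ω, χ ω ^ 2 ∂μ := by
  have h := (hstat.comp (measurable_id.pow_const 2)).integral_eq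
  simp only [Function.comp_def, id] at h
  rw [integral_add_sq_of_add_mul_eq_zero (Z := fun ω => X ω + A ω - S ω)
      ((hX.add hA).sub hS) hχ hcomp,
    integral_sub_sq_of_indepFun (X := fun ω => X ω + A ω) (hX.add hA) hS hXAS,
    integral_add_sq_of_indepFun hX hA hXA, integral_add (hX.integrable one_le_two)
      (hA.integrable one_le_two)] at h
  linarith

end

theorem stmt16_general {Ω : Type*} [MeasurableSpace Ω] (μ : Measure Ω) [IsProbabilityMeasure μ]
    (Φ α β χ Φplus : Ω → ℝ)
    (hαmeas : Measurable α) (hβmeas : Measurable β)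
    (hα0 : ∀ ω, 0 ≤ α ω) (hβ0 : ∀ ω, 0 ≤ β ω)
    (hbdd : ∃ B : ℝ, ∀ ω, α ω ≤ B ∧ β ω ≤ B)
    (hindep : iIndepFun ![Φ, α, β] μ)
    (c ε : ℝ) (hc : 0 < c) (hε : ε ∈ Set.Ioo (0 : ℝ) 1)
    (hEα : ∫ ω, α ω ∂μ = (1 - ε) * c) (hEβ : ∫ ω, β ω ∂μ = c)
    (hχ : χ = fun ω => max (β ω - Φ ω - α ω) 0)
    (hΦplus : Φplus = fun ω => Φ ω + α ω - β ω + χ ω)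
    (hstat : μ.map Φplus = μ.map Φ)
    (hL2 : MemLp Φ 2 μ)
    (hcomp : ∀ᵐ ω ∂μ, Φplus ω * χ ω = 0) :
    (∫ ω, Φ ω ∂μ ≥
      ((∫ ω, (α ω) ^ 2 ∂μ) + (∫ ω, (β ω) ^ 2 ∂μ)
        - 2 * (∫ ω, α ω ∂μ) * (∫ ω, β ω ∂μ) - ∫ ω, (χ ω) ^ 2 ∂μ) / (2 * ε * c))
    ∧ ∫ ω, χ ω ∂μ = ε * c := by
  subst hΦplus
  obtain ⟨B, hB⟩ := hbdd
  have hα : MemLp α 2 μ := memLp_of_nonneg_of_le hαmeas.aestronglyMeasurable hα0 (hB · |>.1)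
  have hβ : MemLp β 2 μ := memLp_of_nonneg_of_le hβmeas.aestronglyMeasurable hβ0 (hB · |>.2)
  have hχL2 : MemLp χ 2 μ := hχ ▸ ((hβ.sub hL2).sub hα).pos_part
  have hmeas : ∀ i, AEMeasurable (![Φ, α, β] i) μ := by
    intro i
    fin_cases i
    exacts [hL2.1.aemeasurable, hαmeas.aemeasurable, hβmeas.aemeasurable]
  have hΦα : IndepFun Φ α μ := by simpa using hindep.indepFun (i := 0) (j := 1) (by decide)
  have hΦαβ : IndepFun (Φ + α) β μ := by
    simpa using hindep.indepFun_add_left₀ hmeas 0 1 2 (by decide) (by decide)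
  have hid : IdentDistrib (fun ω => Φ ω + α ω - β ω + χ ω) Φ μ μ :=
    ⟨(((hL2.add hα).sub hβ).add hχL2).1.aemeasurable, hL2.1.aemeasurable, hstat⟩
  have hEχ := first_moment_drift_eq_of_identDistrib (hL2.integrable one_le_two)
    (hα.integrable one_le_two) (hβ.integrable one_le_two) (hχL2.integrable one_le_two) hid
  have hdrift := second_moment_drift_eq_of_identDistrib hL2 hα hβ hχL2 hΦα hΦαβ hid hcomp
  rw [hEα, hEβ] at hEχ hdrift ⊢
  refine ⟨?_, by linarith⟩
  rw [ge_iff_le, div_le_iff₀ (by have := hε.1; positivity)]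
  linarith

/-- steady-state drift bound for a single-server queue: if `Φ⁺ = Φ + α − β + χ`
with `χ = max(β − Φ − α, 0)` has the same distribution as `Φ`, `Φ⁺ χ = 0` a.s.,
`E α = (1−ε)c`, `E β = c`, then
`E Φ ≥ (E α² + E β² − 2 E α E β − E χ²) / (2 ε c)` and `E χ = ε c`. -/
theorem stmt16 {Ω : Type*} [MeasurableSpace Ω] (μ : Measure Ω) [IsProbabilityMeasure μ]
    (Φ α β χ Φplus : Ω → ℝ)
    (hΦmeas : Measurable Φ) (hαmeas : Measurable α) (hβmeas : Measurable β)
    (hΦ0 : ∀ ω, 0 ≤ Φ ω) (hα0 : ∀ ω, 0 ≤ α ω) (hβ0 : ∀ ω, 0 ≤ β ω)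
    (hbdd : ∃ B : ℝ, ∀ ω, α ω ≤ B ∧ β ω ≤ B)
    (hindep : iIndepFun ![Φ, α, β] μ)
    (c ε : ℝ) (hc : 0 < c) (hε : ε ∈ Set.Ioo (0 : ℝ) 1)
    (hEα : ∫ ω, α ω ∂μ = (1 - ε) * c) (hEβ : ∫ ω, β ω ∂μ = c)
    (hχ : χ = fun ω => max (β ω - Φ ω - α ω) 0)
    (hΦplus : Φplus = fun ω => Φ ω + α ω - β ω + χ ω)
    (hstat : μ.map Φplus = μ.map Φ)
    (hL2 : MemLp Φ 2 μ)
    (hcomp : ∀ᵐ ω ∂μ, Φplus ω * χ ω = 0) :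
    (∫ ω, Φ ω ∂μ ≥
      ((∫ ω, (α ω) ^ 2 ∂μ) + (∫ ω, (β ω) ^ 2 ∂μ)
        - 2 * (∫ ω, α ω ∂μ) * (∫ ω, β ω ∂μ) - ∫ ω, (χ ω) ^ 2 ∂μ) / (2 * ε * c))
    ∧ ∫ ω, χ ω ∂μ = ε * c :=
  stmt16_general μ Φ α β χ Φplus hαmeas hβmeas hα0 hβ0 hbdd hindep c ε hc hε hEα hEβ hχ hΦplus hstat
    hL2 hcomp
end
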